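/- Let m ≥ 1 and b ≥ 1 be integers with b ≤ m. Then for all β ∈ {0, …, 2^b − 1}, all σ_{1:m+1}, τ_{1:m+1} ∈ {0,1}^{m+1}, Σ_{α=0}^{2^b−1} Q^α_{m,b}(σ_{1:m}, τ_{1:m}) · A^{αβ}(σ_{m+1}, τ_{m+1}) = Q^β_{m+1,b}(σ_{1:m+1}, τ_{1:m+1}), where A^{αβ}(σ,τ) = χ^α((σ+u^β)/2)·exp(−πi(σ+u^β)τ). -/

import Mathlib

/-- `χ^α`: the indicator function of the dyadic interval `[α/2^b, (α+1)/2^b)`. -/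
noncomputable def chi (b : ℕ) (α : Fin (2 ^ b)) (x : ℝ) : ℝ :=
  if ((α : ℕ) : ℝ) / 2 ^ b ≤ x ∧ x < (((α : ℕ) : ℝ) + 1) / 2 ^ b then 1 else 0

/-- The AQFT MPO core `A^{αβ}(σ,τ) = χ^α((σ+u^β)/2)·exp(−πi(σ+u^β)τ)` with `u^β = β/2^b`. -/
noncomputable def AQcore (b : ℕ) (α β : Fin (2 ^ b)) (σ τ : Fin 2) : ℂ :=
  ((chi b α ((((σ : ℕ) : ℝ) + ((β : ℕ) : ℝ) / 2 ^ b) / 2) : ℝ) : ℂ) *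
    Complex.exp (-(Real.pi : ℂ) * Complex.I *
      (((((σ : ℕ) : ℝ) + ((β : ℕ) : ℝ) / 2 ^ b : ℝ) : ℂ)) * ((τ : ℕ) : ℂ))

/-- The AQFT tensor with approximation level `b`:
`F_{m,b}(σ,τ) = exp(−πi Σ_{k=1}^m Σ_{l=max(1,k−b)}^m 2^{−k} 2^{l} σ_k τ_l)`. -/
noncomputable def Faqft (m b : ℕ) (σ τ : Fin m → Fin 2) : ℂ :=
  Complex.exp (-(Real.pi : ℂ) * Complex.I *
    ((∑ k : Fin m, ∑ l ∈ Finset.univ.filter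
        (fun l : Fin m => max 1 ((k : ℕ) + 1 - b) ≤ (l : ℕ) + 1),
      (2 : ℝ) ^ ((l : ℕ) + 1) / (2 : ℝ) ^ ((k : ℕ) + 1) *
        ((σ k : ℕ) : ℝ) * ((τ l : ℕ) : ℝ) : ℝ) : ℂ))

/-- The `j`-th binary digit (most significant first, `j` 0-based here for the paper's
1-based `j`) of `β ∈ {0,…,2^b−1}`: `β = Σ_{j=1}^b β_j 2^{b−j}`. -/
def digit (b : ℕ) (β : Fin (2 ^ b)) (j : Fin b) : ℕ :=
  (β : ℕ) / 2 ^ (b - ((j : ℕ) + 1)) % 2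

/-- The truncated binary decimal `[0.τ_m τ_{m−1} … τ_{m−b+j}] = Σ_{l=m−b+j}^m τ_l 2^{l−m−1}`
(here the `Fin b`-index `j` corresponds to the paper's 1-based `j`). -/
noncomputable def dtail (m b : ℕ) (τ : Fin m → Fin 2) (j : Fin b) : ℝ :=
  ∑ l ∈ Finset.univ.filter (fun l : Fin m => m - b + ((j : ℕ) + 1) ≤ (l : ℕ) + 1),
    ((τ l : ℕ) : ℝ) * (2 : ℝ) ^ ((l : ℕ) + 1) / (2 : ℝ) ^ (m + 1)

/-- `B^β_{m,b}(τ) = exp(−2πi Σ_{j=1}^b β_j 2^{−j} [0.τ_m … τ_{m−b+j}])`. -/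
noncomputable def Bphase (m b : ℕ) (β : Fin (2 ^ b)) (τ : Fin m → Fin 2) : ℂ :=
  Complex.exp (-2 * (Real.pi : ℂ) * Complex.I *
    ((∑ j : Fin b, (digit b β j : ℝ) / 2 ^ ((j : ℕ) + 1) * dtail m b τ j : ℝ) : ℂ))

/-- `Q^β_{m,b}(σ,τ) = F_{m,b}(σ,τ)·B^β_{m,b}(τ)`. -/
noncomputable def Qmb (m b : ℕ) (β : Fin (2 ^ b)) (σ τ : Fin m → Fin 2) : ℂ :=
  Faqft m b σ τ * Bphase m b β τ



lemma nat_mod_mul (n a b : ℕ) : n % (a * b) = n % a + a * (n / a % b) := by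
  have h1 : n % a = n % (a * b) % a := (Nat.mod_mod_of_dvd n ⟨b, rfl⟩).symm
  have h2 : n / a % b = n % (a * b) / a := (Nat.mod_mul_right_div_self n a b).symm
  rw [h1, h2, Nat.mod_add_div]

lemma bits_sum_range (b n : ℕ) :
    ∑ i ∈ Finset.range b, (n / 2 ^ i % 2) * 2 ^ i = n % 2 ^ b := by
  induction b with
  | zero => simp [Nat.mod_one]
  | succ b ih =>
    rw [Finset.sum_range_succ, ih, pow_succ, nat_mod_mul n (2^b) 2]
    ring

lemma bits_sum (b : ℕ) (β : Fin (2 ^ b)) :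
    ∑ j : Fin b, (β : ℕ) / 2 ^ (b - ((j : ℕ) + 1)) % 2 * 2 ^ (b - ((j : ℕ) + 1))
      = (β : ℕ) := by
  rw [Fin.sum_univ_eq_sum_range (fun j => (β:ℕ) / 2 ^ (b - (j+1)) % 2 * 2 ^ (b - (j+1)))]
  calc ∑ j ∈ Finset.range b, (β:ℕ) / 2 ^ (b - (j+1)) % 2 * 2 ^ (b - (j+1))
      = ∑ j ∈ Finset.range b, (β:ℕ) / 2 ^ (b - 1 - j) % 2 * 2 ^ (b - 1 - j) := by
        apply Finset.sum_congr rfl; intro i _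
        have : b - 1 - i = b - (i + 1) := by omega
        rw [this]
    _ = ∑ j ∈ Finset.range b, (β:ℕ) / 2 ^ j % 2 * 2 ^ j :=
        Finset.sum_range_reflect (fun i => (β:ℕ) / 2 ^ i % 2 * 2 ^ i) b
    _ = (β:ℕ) % 2 ^ b := bits_sum_range b β
    _ = (β:ℕ) := Nat.mod_eq_of_lt β.isLt



lemma digA0 (b s q : ℕ) (hs : s < 2) (hq : q < 2 ^ b) :
    (s * 2 ^ b + q) / 2 ^ b % 2 = s := by
  rw [add_comm, Nat.add_mul_div_right _ _ (Nat.pos_of_ne_zero (by positivity)),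
    Nat.div_eq_of_lt hq, zero_add, Nat.mod_eq_of_lt hs]

lemma digAj (b e s q : ℕ) (he : e + 1 ≤ b) :
    (s * 2 ^ b + q) / 2 ^ e % 2 = q / 2 ^ e % 2 := by
  have h2 : 2 ^ b = 2 ^ (b - e - 1) * 2 * 2 ^ e := by
    rw [mul_assoc, ← pow_succ', ← pow_add]
    congr 1
    omega
  rw [h2, ← mul_assoc, add_comm, Nat.add_mul_div_right _ _ (by positivity),
    ← mul_assoc, Nat.add_mul_mod_self_right]

lemma bits_sum_real (b : ℕ) (β : Fin (2^b)) :
    ∑ j : Fin b, (digit b β j : ℝ) / 2 ^ ((j:ℕ)+1) = ((β:ℕ):ℝ) / 2^b := by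
  rw [eq_div_iff (by positivity : (2:ℝ)^b ≠ 0), Finset.sum_mul]
  have h : ∀ j : Fin b, (digit b β j : ℝ) / 2 ^ ((j:ℕ)+1) * 2^b
      = ((digit b β j * 2 ^ (b - ((j:ℕ)+1)) : ℕ) : ℝ) := by
    intro j
    have hp : (2:ℝ)^b = 2 ^ (b - ((j:ℕ)+1)) * 2 ^ ((j:ℕ)+1) := by
      rw [← pow_add]; congr 1; have := j.isLt; omega
    rw [hp]
    push_cast
    field_simp
  rw [Finset.sum_congr rfl (fun j _ => h j), ← Nat.cast_sum]
  exact_mod_cast congrArg (Nat.cast : ℕ → ℝ) (bits_sum b β)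

lemma dtail_split (m b : ℕ) (hb : 1 ≤ b) (hbm : b ≤ m) (τ : Fin (m+1) → Fin 2)
    (j : Fin b) :
    dtail (m+1) b τ j = ((τ (Fin.last m) : ℕ) : ℝ) / 2 +
      (1/2) * ∑ l ∈ Finset.univ.filter
          (fun l : Fin m => m - b + ((j : ℕ) + 2) ≤ (l : ℕ) + 1),
        ((τ l.castSucc : ℕ) : ℝ) * (2 : ℝ) ^ ((l : ℕ) + 1) / (2 : ℝ) ^ (m + 1) := by
  unfold dtail
  rw [Finset.sum_filter, Fin.sum_univ_castSucc]
  have hlast : m + 1 - b + ((j : ℕ) + 1) ≤ ((Fin.last m : Fin (m+1)) : ℕ) + 1 := by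
    simp only [Fin.val_last]
    have := j.isLt
    omega
  rw [if_pos hlast]
  simp only [Fin.coe_castSucc]
  have h2 : (2:ℝ)^(m+1) ≠ 0 := by positivity
  have h1 : (∑ x : Fin m, if m + 1 - b + ((j:ℕ) + 1) ≤ (x:ℕ) + 1 then
        ((τ x.castSucc : ℕ):ℝ) * 2 ^ ((x:ℕ) + 1) / 2 ^ (m + 1 + 1) else 0)
      = (1/2) * ∑ l ∈ Finset.univ.filter
          (fun l : Fin m => m - b + ((j : ℕ) + 2) ≤ (l : ℕ) + 1),
        ((τ l.castSucc : ℕ) : ℝ) * (2 : ℝ) ^ ((l : ℕ) + 1) / (2 : ℝ) ^ (m + 1) := by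
    rw [Finset.sum_filter, Finset.mul_sum]
    apply Finset.sum_congr rfl
    intro l _
    have hc : (m + 1 - b + ((j : ℕ) + 1) ≤ (l : ℕ) + 1) ↔
        (m - b + ((j : ℕ) + 2) ≤ (l : ℕ) + 1) := by omega
    by_cases h : m - b + ((j : ℕ) + 2) ≤ (l : ℕ) + 1
    · rw [if_pos (hc.mpr h), if_pos h]
      have : (2:ℝ) ^ (m + 1 + 1) = 2 ^ (m+1) * 2 := by ring
      rw [this]
      ring
    · rw [if_neg (fun hh => h (hc.mp hh)), if_neg h, mul_zero]
  rw [h1]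
  simp only [Fin.val_last]
  have : (2:ℝ) ^ (m + 1 + 1) = 2 ^ (m+1) * 2 := by ring
  rw [this]
  field_simp
  ring

lemma F_split (m b : ℕ) (hb : 1 ≤ b) (hbm : b ≤ m) (σ τ : Fin (m+1) → Fin 2) :
    (∑ k : Fin (m+1), ∑ l ∈ Finset.univ.filter
        (fun l : Fin (m+1) => max 1 ((k : ℕ) + 1 - b) ≤ (l : ℕ) + 1),
      (2:ℝ)^((l:ℕ)+1) / (2:ℝ)^((k:ℕ)+1) * ((σ k : ℕ):ℝ) * ((τ l : ℕ):ℝ))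
    = (∑ k : Fin m, ∑ l ∈ Finset.univ.filter
        (fun l : Fin m => max 1 ((k : ℕ) + 1 - b) ≤ (l : ℕ) + 1),
      (2:ℝ)^((l:ℕ)+1) / (2:ℝ)^((k:ℕ)+1) * ((σ k.castSucc : ℕ):ℝ) * ((τ l.castSucc : ℕ):ℝ))
    + ((σ (Fin.last m) : ℕ):ℝ) * dtail m b (fun i => τ i.castSucc) ⟨0, hb⟩
    + ((σ (Fin.last m) : ℕ):ℝ) * ((τ (Fin.last m) : ℕ):ℝ)
    + ∑ k : Fin m, (2:ℝ)^(m - (k:ℕ)) * ((σ k.castSucc : ℕ):ℝ) * ((τ (Fin.last m) : ℕ):ℝ) := by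
  rw [Fin.sum_univ_castSucc]
  have hk : ∀ k0 : Fin m,
      (∑ l ∈ Finset.univ.filter
          (fun l : Fin (m+1) => max 1 (((k0.castSucc : Fin (m+1)) : ℕ) + 1 - b) ≤ (l : ℕ) + 1),
        (2:ℝ)^((l:ℕ)+1) / (2:ℝ)^(((k0.castSucc : Fin (m+1)) : ℕ)+1) *
          ((σ k0.castSucc : ℕ):ℝ) * ((τ l : ℕ):ℝ))
      = (∑ l ∈ Finset.univ.filter
          (fun l : Fin m => max 1 ((k0 : ℕ) + 1 - b) ≤ (l : ℕ) + 1),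
        (2:ℝ)^((l:ℕ)+1) / (2:ℝ)^((k0:ℕ)+1) * ((σ k0.castSucc : ℕ):ℝ) * ((τ l.castSucc : ℕ):ℝ))
        + (2:ℝ)^(m - (k0:ℕ)) * ((σ k0.castSucc : ℕ):ℝ) * ((τ (Fin.last m) : ℕ):ℝ) := by
    intro k0
    rw [Finset.sum_filter, Fin.sum_univ_castSucc, Finset.sum_filter]
    simp only [Fin.coe_castSucc, Fin.val_last]
    have hlast : max 1 ((k0:ℕ) + 1 - b) ≤ m + 1 := by
      have := k0.isLt; omega
    rw [if_pos hlast]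
    have hpow : (2:ℝ)^(m+1) / (2:ℝ)^((k0:ℕ)+1) = 2^(m - (k0:ℕ)) := by
      have h1 : (2:ℝ)^(m+1) = 2^(m - (k0:ℕ)) * 2^((k0:ℕ)+1) := by
        rw [← pow_add]; congr 1; have := k0.isLt; omega
      rw [h1]
      field_simp
    rw [hpow]
  have hlastrow :
      (∑ l ∈ Finset.univ.filter
          (fun l : Fin (m+1) => max 1 (((Fin.last m : Fin (m+1)) : ℕ) + 1 - b) ≤ (l : ℕ) + 1),
        (2:ℝ)^((l:ℕ)+1) / (2:ℝ)^(((Fin.last m : Fin (m+1)) : ℕ)+1) *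
          ((σ (Fin.last m) : ℕ):ℝ) * ((τ l : ℕ):ℝ))
      = ((σ (Fin.last m) : ℕ):ℝ) * dtail m b (fun i => τ i.castSucc) ⟨0, hb⟩
        + ((σ (Fin.last m) : ℕ):ℝ) * ((τ (Fin.last m) : ℕ):ℝ) := by
    rw [Finset.sum_filter, Fin.sum_univ_castSucc]
    simp only [Fin.coe_castSucc, Fin.val_last]
    have hlast : max 1 (m + 1 - b) ≤ m + 1 := by omega
    rw [if_pos hlast]
    have h1 : (∑ x : Fin m, if max 1 (m + 1 - b) ≤ (x:ℕ) + 1 then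
          (2:ℝ)^((x:ℕ)+1) / (2:ℝ)^(m+1) * ((σ (Fin.last m) : ℕ):ℝ) * ((τ x.castSucc : ℕ):ℝ) else 0)
        = ((σ (Fin.last m) : ℕ):ℝ) * dtail m b (fun i => τ i.castSucc) ⟨0, hb⟩ := by
      unfold dtail
      rw [Finset.sum_filter, Finset.mul_sum]
      apply Finset.sum_congr rfl
      intro l _
      have hc : (max 1 (m + 1 - b) ≤ (l:ℕ) + 1) ↔ (m - b + (0 + 1) ≤ (l:ℕ) + 1) := by omega
      by_cases h : m - b + (0 + 1) ≤ (l:ℕ) + 1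
      · rw [if_pos (hc.mpr h), if_pos h]
        ring
      · rw [if_neg (fun hh => h (hc.mp hh)), if_neg h, mul_zero]
    rw [h1]
    have : (2:ℝ)^(m+1) / (2:ℝ)^(m+1) = 1 := by
      apply div_self; positivity
    rw [this]
    ring
  rw [Finset.sum_congr rfl (fun k0 _ => hk k0), hlastrow, Finset.sum_add_distrib]
  ring

lemma S_split (m b' : ℕ) (hbm : b' + 1 ≤ m) (σ τ : Fin (m+1) → Fin 2)
    (β A : Fin (2^(b'+1)))
    (hA0 : digit (b'+1) A ⟨0, Nat.succ_pos b'⟩ = ((σ (Fin.last m)) : ℕ))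
    (hAj : ∀ i : Fin b', digit (b'+1) A i.succ = digit (b'+1) β i.castSucc) :
    2 * (∑ j : Fin (b'+1), (digit (b'+1) β j : ℝ) / 2^((j:ℕ)+1) * dtail (m+1) (b'+1) τ j)
      + ((σ (Fin.last m) : ℕ):ℝ) * dtail m (b'+1) (fun i => τ i.castSucc) ⟨0, Nat.succ_pos b'⟩
    = ((β:ℕ):ℝ)/2^(b'+1) * ((τ (Fin.last m) : ℕ):ℝ)
      + 2 * ∑ j : Fin (b'+1), (digit (b'+1) A j : ℝ) / 2^((j:ℕ)+1) *
          dtail m (b'+1) (fun i => τ i.castSucc) j := by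
  set t : ℝ := ((τ (Fin.last m) : ℕ):ℝ) with ht
  set τ' : Fin m → Fin 2 := fun i => τ i.castSucc with hτ'
  -- Dn j : the shifted tail sum
  set Dn : Fin (b'+1) → ℝ := fun j => ∑ l ∈ Finset.univ.filter
      (fun l : Fin m => m - (b'+1) + ((j : ℕ) + 2) ≤ (l : ℕ) + 1),
    ((τ' l : ℕ) : ℝ) * (2 : ℝ) ^ ((l : ℕ) + 1) / (2 : ℝ) ^ (m + 1) with hDn
  have hsplit : ∀ j : Fin (b'+1), dtail (m+1) (b'+1) τ j = t/2 + (1/2) * Dn j :=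
    fun j => dtail_split m (b'+1) (Nat.succ_pos b') hbm τ j
  -- LHS first sum
  have h1 : (∑ j : Fin (b'+1), (digit (b'+1) β j : ℝ) / 2^((j:ℕ)+1) * dtail (m+1) (b'+1) τ j)
      = (∑ j : Fin (b'+1), (digit (b'+1) β j : ℝ) / 2^((j:ℕ)+1)) * (t/2)
        + (1/2) * ∑ j : Fin (b'+1), (digit (b'+1) β j : ℝ) / 2^((j:ℕ)+1) * Dn j := by
    rw [Finset.sum_mul, Finset.mul_sum, ← Finset.sum_add_distrib]
    apply Finset.sum_congr rfl
    intro j _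
    rw [hsplit j]
    ring
  -- Dn at the last index vanishes
  have hDlast : Dn (Fin.last b') = 0 := by
    rw [hDn]
    apply Finset.sum_eq_zero
    intro l hl
    simp only [Finset.mem_filter, Fin.val_last] at hl
    have := l.isLt
    omega
  -- Dn (castSucc i) is dtail at i.succ
  have hDcast : ∀ i : Fin b', Dn i.castSucc = dtail m (b'+1) τ' i.succ := by
    intro i
    have hb : Dn i.castSucc = ∑ l ∈ Finset.univ.filter
        (fun l : Fin m => m - (b'+1) + ((i.castSucc : ℕ) + 2) ≤ (l : ℕ) + 1),
      ((τ' l : ℕ) : ℝ) * (2 : ℝ) ^ ((l : ℕ) + 1) / (2 : ℝ) ^ (m + 1) := rfl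
    rw [hb]
    unfold dtail
    rw [Finset.sum_filter, Finset.sum_filter]
    apply Finset.sum_congr rfl
    intro l _
    have hc : (m - (b'+1) + ((i.castSucc : ℕ) + 2) ≤ (l:ℕ) + 1)
        ↔ (m - (b'+1) + ((i.succ : ℕ) + 1) ≤ (l:ℕ) + 1) := by
      simp only [Fin.coe_castSucc, Fin.val_succ]
      try omega
    by_cases h : m - (b'+1) + ((i.succ : ℕ) + 1) ≤ (l:ℕ) + 1
    · rw [if_pos (hc.mpr h), if_pos h]
    · rw [if_neg (fun hh => h (hc.mp hh)), if_neg h]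
  -- the middle sum via castSucc split
  have h2 : (∑ j : Fin (b'+1), (digit (b'+1) β j : ℝ) / 2^((j:ℕ)+1) * Dn j)
      = ∑ i : Fin b', (digit (b'+1) β i.castSucc : ℝ) / 2^((i:ℕ)+1) *
          dtail m (b'+1) τ' i.succ := by
    rw [Fin.sum_univ_castSucc, hDlast, mul_zero, add_zero]
    apply Finset.sum_congr rfl
    intro i _
    rw [hDcast i]
    simp only [Fin.coe_castSucc]
  -- the RHS sum via succ split
  have h3 : (∑ j : Fin (b'+1), (digit (b'+1) A j : ℝ) / 2^((j:ℕ)+1) * dtail m (b'+1) τ' j)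
      = ((σ (Fin.last m) : ℕ):ℝ) / 2 * dtail m (b'+1) τ' ⟨0, Nat.succ_pos b'⟩
        + ∑ i : Fin b', (digit (b'+1) β i.castSucc : ℝ) / (2 * 2^((i:ℕ)+1)) *
            dtail m (b'+1) τ' i.succ := by
    rw [Fin.sum_univ_succ]
    congr 1
    · have h0 : (0 : Fin (b'+1)) = ⟨0, Nat.succ_pos b'⟩ := rfl
      rw [h0, hA0]
      norm_num
    · apply Finset.sum_congr rfl
      intro i _
      rw [hAj i]
      have : (2:ℝ) ^ ((i.succ : ℕ) + 1) = 2 * 2 ^ ((i:ℕ)+1) := by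
        simp only [Fin.val_succ]
        ring
      rw [this]
  rw [h1, h2, h3, bits_sum_real]
  have h4 : (∑ i : Fin b', (digit (b'+1) β i.castSucc : ℝ) / 2^((i:ℕ)+1) *
        dtail m (b'+1) τ' i.succ)
      = 2 * ∑ i : Fin b', (digit (b'+1) β i.castSucc : ℝ) / (2 * 2^((i:ℕ)+1)) *
        dtail m (b'+1) τ' i.succ := by
    rw [Finset.mul_sum]
    apply Finset.sum_congr rfl
    intro i _
    have hne : (2:ℝ) ^ ((i:ℕ)+1) ≠ 0 := by positivity
    field_simp
  rw [h4]
  ring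

lemma chi_eq (b s : ℕ) (hs : s < 2) (β α : Fin (2^(b+1))) :
    chi (b+1) α (((s:ℝ) + ((β:ℕ):ℝ)/2^(b+1))/2)
      = if (α:ℕ) = s*2^b + (β:ℕ)/2 then 1 else 0 := by
  unfold chi
  have h2 : (0:ℝ) < 2^(b+1) := by positivity
  have hr0 : (0:ℝ) ≤ (((β:ℕ)%2 : ℕ):ℝ) := Nat.cast_nonneg _
  have hr1 : (((β:ℕ)%2 : ℕ):ℝ) ≤ 1 := by
    have : (β:ℕ)%2 ≤ 1 := by omega
    exact_mod_cast this
  have hdm : ((β:ℕ):ℝ) = 2*(((β:ℕ)/2 : ℕ):ℝ) + (((β:ℕ)%2 : ℕ):ℝ) := by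
    exact_mod_cast (Nat.div_add_mod (β:ℕ) 2).symm
  have hx2 : ((s:ℝ) + ((β:ℕ):ℝ)/2^(b+1))/2 * 2^(b+1)
      = ((s*2^b + (β:ℕ)/2 : ℕ):ℝ) + (((β:ℕ)%2 : ℕ):ℝ)/2 := by
    push_cast
    rw [show (2:ℝ)^(b+1) = 2^b*2 by ring]
    field_simp
    linear_combination hdm
  by_cases hαA : (α:ℕ) = s*2^b + (β:ℕ)/2
  · rw [if_pos hαA, if_pos]
    constructor
    · rw [div_le_iff₀ h2, hx2, hαA]
      nlinarith
    · rw [lt_div_iff₀ h2, hx2, hαA]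
      nlinarith
  · rw [if_neg hαA, if_neg]
    rintro ⟨hle, hlt⟩
    rw [div_le_iff₀ h2] at hle
    rw [lt_div_iff₀ h2] at hlt
    rw [hx2] at hle hlt
    have h1n : ((α:ℕ):ℝ) ≤ ((s*2^b + (β:ℕ)/2 : ℕ):ℝ) + 1/2 := by linarith
    have h2n : ((s*2^b + (β:ℕ)/2 : ℕ):ℝ) < ((α:ℕ):ℝ) + 1 := by linarith
    have h1r : ((2*(α:ℕ) : ℕ) : ℝ) ≤ ((2*(s*2^b + (β:ℕ)/2) + 1 : ℕ) : ℝ) := by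
      push_cast
      push_cast at h1n
      linarith
    have h1' : 2*(α:ℕ) ≤ 2*(s*2^b + (β:ℕ)/2) + 1 := by exact_mod_cast h1r
    have h2r : ((s*2^b + (β:ℕ)/2 : ℕ) : ℝ) < (((α:ℕ) + 1 : ℕ) : ℝ) := by push_cast; push_cast at h2n; linarith
    have h2' : (s*2^b + (β:ℕ)/2) < (α:ℕ) + 1 := by exact_mod_cast h2r
    omega

/-- The one-step recursion of the AQFT MPO:
`Σ_α Q^α_{m,b}(σ_{1:m},τ_{1:m})·A^{αβ}(σ_{m+1},τ_{m+1}) = Q^β_{m+1,b}(σ_{1:m+1},τ_{1:m+1})`. -/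
theorem aqft_mpo_recursion (m b : ℕ) (hm : 1 ≤ m) (hb : 1 ≤ b) (hbm : b ≤ m)
    (β : Fin (2 ^ b)) (σ τ : Fin (m + 1) → Fin 2) :
    ∑ α : Fin (2 ^ b),
      Qmb m b α (fun i => σ i.castSucc) (fun i => τ i.castSucc) *
        AQcore b α β (σ (Fin.last m)) (τ (Fin.last m)) =
      Qmb (m + 1) b β σ τ := by
  obtain ⟨b', rfl⟩ : ∃ b'', b = b'' + 1 := ⟨b - 1, by omega⟩
  set s : ℕ := ((σ (Fin.last m)) : ℕ) with hsdef
  set t : ℕ := ((τ (Fin.last m)) : ℕ) with htdef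
  have hs2 : s < 2 := (σ (Fin.last m)).isLt
  have hq : (β:ℕ)/2 < 2^b' := by
    have h1 := β.isLt
    have h2 : (2:ℕ)^(b'+1) = 2^b' * 2 := pow_succ 2 b'
    omega
  have hAlt : s * 2^b' + (β:ℕ)/2 < 2^(b'+1) := by
    have h1 : s * 2^b' ≤ 1 * 2^b' := Nat.mul_le_mul_right _ (by omega)
    have h2 : (2:ℕ)^(b'+1) = 2^b' * 2 := pow_succ 2 b'
    omega
  set A : Fin (2^(b'+1)) := ⟨s * 2^b' + (β:ℕ)/2, hAlt⟩ with hAdef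
  -- digit facts
  have hA0 : digit (b'+1) A ⟨0, Nat.succ_pos b'⟩ = s := by
    unfold digit
    show (s * 2^b' + (β:ℕ)/2) / 2 ^ (b' + 1 - (0 + 1)) % 2 = s
    rw [show b' + 1 - (0 + 1) = b' by omega]
    exact digA0 b' s _ hs2 hq
  have hAj : ∀ i : Fin b', digit (b'+1) A i.succ = digit (b'+1) β i.castSucc := by
    intro i
    have hiv := i.isLt
    unfold digit
    show (s * 2^b' + (β:ℕ)/2) / 2 ^ (b' + 1 - ((i:ℕ) + 1 + 1)) % 2
      = (β:ℕ) / 2 ^ (b' + 1 - ((i:ℕ) + 1)) % 2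
    rw [show b' + 1 - ((i:ℕ) + 1 + 1) = b' - ((i:ℕ)+1) by omega,
      show b' + 1 - ((i:ℕ) + 1) = b' - (i:ℕ) by omega]
    rw [digAj b' (b' - ((i:ℕ)+1)) s _ (by omega)]
    rw [Nat.div_div_eq_div_mul]
    congr 2
    rw [← pow_succ']
    congr 1
    omega
  rw [Finset.sum_eq_single A]
  · -- main case
    show Qmb m (b'+1) A _ _ * AQcore (b'+1) A β _ _ = _
    unfold Qmb AQcore Faqft Bphase
    rw [chi_eq b' s hs2 β A, if_pos rfl]
    rw [Complex.ofReal_one, one_mul, ← Complex.exp_add, ← Complex.exp_add,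
      ← Complex.exp_add]
    rw [Complex.exp_eq_exp_iff_exists_int]
    set N : ℕ := ∑ k : Fin m, 2^(m - 1 - (k:ℕ)) * ((σ k.castSucc) : ℕ) * t with hNdef
    refine ⟨(N : ℤ), ?_⟩
    -- real identity
    have hN : (∑ k : Fin m, (2:ℝ)^(m - (k:ℕ)) * (((σ k.castSucc) : ℕ):ℝ) * (t:ℝ))
        = 2 * (N:ℝ) := by
      rw [hNdef]
      push_cast
      rw [Finset.mul_sum]
      apply Finset.sum_congr rfl
      intro k _
      have hk := k.isLt
      rw [show m - (k:ℕ) = (m - 1 - (k:ℕ)) + 1 by omega, pow_succ]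
      ring
    have h5 := F_split m (b'+1) (Nat.succ_pos b') hbm σ τ
    have h6 := S_split m b' hbm σ τ β A hA0 hAj
    rw [hN] at h5
    set Fm1 : ℝ := ∑ k : Fin (m+1), ∑ l ∈ Finset.univ.filter
        (fun l : Fin (m+1) => max 1 ((k : ℕ) + 1 - (b'+1)) ≤ (l : ℕ) + 1),
      (2:ℝ)^((l:ℕ)+1) / (2:ℝ)^((k:ℕ)+1) * ((σ k : ℕ):ℝ) * ((τ l : ℕ):ℝ) with hFm1
    set Fm : ℝ := ∑ k : Fin m, ∑ l ∈ Finset.univ.filter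
        (fun l : Fin m => max 1 ((k : ℕ) + 1 - (b'+1)) ≤ (l : ℕ) + 1),
      (2:ℝ)^((l:ℕ)+1) / (2:ℝ)^((k:ℕ)+1) * ((σ k.castSucc : ℕ):ℝ) * ((τ l.castSucc : ℕ):ℝ) with hFm
    set SA : ℝ := ∑ j : Fin (b'+1), (digit (b'+1) A j : ℝ) / 2^((j:ℕ)+1) *
        dtail m (b'+1) (fun i => τ i.castSucc) j with hSA
    set SB : ℝ := ∑ j : Fin (b'+1), (digit (b'+1) β j : ℝ) / 2^((j:ℕ)+1) *
        dtail (m+1) (b'+1) τ j with hSB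
    have HR : Fm1 + 2*SB = Fm + 2*SA + (s:ℝ)*(t:ℝ)
        + ((β:ℕ):ℝ)/2^(b'+1)*(t:ℝ) + 2*(N:ℝ) := by
      linarith [h5, h6]
    have HC : ((Fm1 : ℝ) : ℂ) + 2*((SB : ℝ) : ℂ)
        = ((Fm : ℝ) : ℂ) + 2*((SA : ℝ) : ℂ) + ((s:ℝ):ℂ)*((t:ℝ):ℂ)
          + ((((β:ℕ):ℝ)/2^(b'+1) : ℝ):ℂ)*((t:ℝ):ℂ) + 2*((N:ℕ):ℂ) := by
      have := congrArg (Complex.ofReal) HR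
      push_cast at this ⊢
      convert this using 2 <;> norm_num
    push_cast
    push_cast at HC
    linear_combination (Real.pi : ℂ) * Complex.I * HC
  · -- other α vanish
    intro α _ hne
    unfold AQcore
    rw [chi_eq b' s hs2 β α, if_neg (fun h => hne (Fin.ext h)),
      Complex.ofReal_zero, zero_mul, mul_zero]
  · intro h
    exact absurd (Finset.mem_univ A) h
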